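/- (Gradient estimate) Let G=(V,E) be a finite graph with Ric(G) ≥ K for some K ∈ ℝ, and let P_t = exp(tΔ) be the heat semigroup. Then for every f:V→ℝ and every t with 0 ≤ t ≤ 1/(2|K|) (no restriction on t if K ≥ 0), ‖f − P_t f‖₁ ≤ 2√t · ‖√(Γ(f))‖₁, where ‖g‖₁ = Σ_{v∈V} |g(v)| and √(Γ(f)) denotes the function v ↦ √(Γ(f)(v)). -/

import Mathlib

noncomputable section
open Matrix

/-- The graph Laplacian: `Δ f (x) = Σ_{y ~ x} (f y - f x)`. -/
def lap {V : Type*} (G : SimpleGraph V) (f : V → ℝ) (x : V) : ℝ :=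
  ∑ᶠ y ∈ {y | G.Adj x y}, (f y - f x)

/-- The carré du champ `Γ(f,g)(x) = (1/2) Σ_{y ~ x} (f x - f y)(g x - g y)`. -/
def gam {V : Type*} (G : SimpleGraph V) (f g : V → ℝ) (x : V) : ℝ :=
  (1/2) * ∑ᶠ y ∈ {y | G.Adj x y}, (f x - f y) * (g x - g y)

/-- The iterated carré du champ `Γ₂(f) = (1/2) Δ Γ(f) - Γ(f, Δ f)`. -/
def gam2 {V : Type*} (G : SimpleGraph V) (f : V → ℝ) (x : V) : ℝ :=
  (1/2) * lap G (gam G f f) x - gam G f (lap G f) x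

/-- `Ric(G) ≥ K` : the Bochner inequality `Γ₂(f)(x) ≥ K Γ(f)(x)` holds for all `f, x`. -/
def RicGE {V : Type*} (G : SimpleGraph V) (K : ℝ) : Prop :=
  ∀ (f : V → ℝ) (x : V), K * gam G f f x ≤ gam2 G f x

open Classical in
/-- Degree of a vertex. -/
def degC {V : Type*} [Fintype V] (G : SimpleGraph V) (x : V) : ℕ :=
  (Finset.univ.filter fun y => G.Adj x y).card

open Classical in
/-- The Laplacian matrix `Δ = A - D` (negative semidefinite). -/
def lapMat {V : Type*} [Fintype V] (G : SimpleGraph V) : Matrix V V ℝ :=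
  Matrix.of fun x y => (if G.Adj x y then (1:ℝ) else 0) - (if x = y then (degC G x : ℝ) else 0)

/-- The spectral gap: least nonzero eigenvalue of `-Δ`. -/
def spectralGap {V : Type*} [Fintype V] (G : SimpleGraph V) : ℝ :=
  sInf {μ : ℝ | μ ≠ 0 ∧ ∃ f : V → ℝ, f ≠ 0 ∧ (-(lapMat G)) *ᵥ f = μ • f}

open Classical in
/-- Number of edges from `A` to its complement. -/
def boundary {V : Type*} [Fintype V] (G : SimpleGraph V) (A : Finset V) : ℕ :=
  ∑ x ∈ A, (Finset.univ.filter fun y => G.Adj x y ∧ y ∉ A).card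

/-- The Cheeger (edge-isoperimetric) constant. -/
def cheeger {V : Type*} [Fintype V] (G : SimpleGraph V) : ℝ :=
  sInf {r : ℝ | ∃ A : Finset V, 0 < A.card ∧ 2 * A.card ≤ Fintype.card V ∧
    r = (boundary G A : ℝ) / (A.card : ℝ)}

/-- The heat semigroup `P_t f = exp(tΔ) f`. -/
def heat {V : Type*} [Fintype V] [DecidableEq V] (G : SimpleGraph V) (t : ℝ) (f : V → ℝ) :
    V → ℝ :=
  (NormedSpace.exp (t • lapMat G)) *ᵥ f

/-! Let `g` be the sign of `f - P_t f`, so that `‖f - P_t f‖₁ = Σ (f - P_t f) g`. Differentiating in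
`t`, Green's formula and the symmetry of `P_s` turn the derivative into `Σ Γ(f, P_s g)`, which by
Cauchy–Schwarz for `Γ` is at most `‖√Γ(f)‖₁ · max √Γ(P_s g)`. The curvature bound enters through the
reverse Poincaré inequality `Γ(P_s g) ≤ 1/s` for `|g| ≤ 1` and `Ks ≥ -1/2`: along the interpolation
`F(u) = P_u Γ(P_{s-u} g)` Bochner's inequality gives `F' ≥ 2K F`, hence `F(u) ≥ e^{2Ku} F(0)`, while
`u ↦ P_u (P_{s-u} g)²` has derivative `2F` and stays in `[0, 1]`. Comparing with `d/ds (2√s) = 1/√s`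
gives the factor `2√t`. -/

lemma le_of_hasDerivAt_nonneg {φ φ' : ℝ → ℝ} {a b : ℝ} (hab : a ≤ b)
    (hcont : ContinuousOn φ (Set.Icc a b)) (hderiv : ∀ u ∈ Set.Ioo a b, HasDerivAt φ (φ' u) u)
    (hnonneg : ∀ u ∈ Set.Ioo a b, 0 ≤ φ' u) : φ a ≤ φ b := by
  refine monotoneOn_of_hasDerivWithinAt_nonneg (f' := φ') (convex_Icc a b) hcont (fun u hu => ?_)
    (fun u hu => ?_) (Set.left_mem_Icc.2 hab) (Set.right_mem_Icc.2 hab) hab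
  · rw [interior_Icc] at hu ⊢
    exact (hderiv u hu).hasDerivWithinAt
  · rw [interior_Icc] at hu
    exact hnonneg u hu

section GraphCalculus

open Finset
open scoped Classical

variable {V : Type*} [Fintype V] (G : SimpleGraph V)

lemma lap_eq_sum (f : V → ℝ) (x : V) : lap G f x = ∑ y ∈ G.neighborFinset x, (f y - f x) := by
  rw [lap, ← finsum_mem_coe_finset, SimpleGraph.coe_neighborFinset]
  rfl

lemma gam_eq_sum (f g : V → ℝ) (x : V) :
    gam G f g x = (1 / 2) * ∑ y ∈ G.neighborFinset x, (f x - f y) * (g x - g y) := by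
  rw [gam, ← finsum_mem_coe_finset, SimpleGraph.coe_neighborFinset]
  rfl

lemma lap_const (c : ℝ) : lap G (fun _ => c) = 0 := by
  ext x
  simp [lap_eq_sum]

lemma gam_self_nonneg (f : V → ℝ) (x : V) : 0 ≤ gam G f f x := by
  rw [gam_eq_sum]
  exact mul_nonneg (by norm_num) (sum_nonneg fun y _ => mul_self_nonneg _)

lemma gam_neg_right (f g : V → ℝ) (x : V) : gam G f (fun y => -g y) x = -gam G f g x := by
  simp only [gam_eq_sum, ← mul_neg, ← sum_neg_distrib]
  congr 1
  exact sum_congr rfl fun y _ => by ring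

lemma gam_le_sqrt_mul_sqrt (f g : V → ℝ) (x : V) :
    gam G f g x ≤ √(gam G f f x) * √(gam G g g x) := by
  simp only [gam_eq_sum, ← sq]
  rw [Real.sqrt_mul (by norm_num), Real.sqrt_mul (by norm_num), mul_mul_mul_comm,
    Real.mul_self_sqrt (by norm_num)]
  gcongr
  exact Real.sum_mul_le_sqrt_mul_sqrt _ _ _

lemma sum_neighborFinset_swap (F : V → V → ℝ) :
    ∑ x, ∑ y ∈ G.neighborFinset x, F x y = ∑ x, ∑ y ∈ G.neighborFinset x, F y x := by
  simp only [SimpleGraph.neighborFinset_eq_filter, sum_filter]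
  rw [sum_comm]
  simp only [G.adj_comm]

lemma sum_lap_mul (f g : V → ℝ) : ∑ x, lap G f x * g x = -∑ x, gam G f g x := by
  set S := ∑ x, ∑ y ∈ G.neighborFinset x, (f y - f x) * g x
  have hS : ∑ x, lap G f x * g x = S := by simp only [S, lap_eq_sum, sum_mul]
  have hswap := sum_neighborFinset_swap G fun x y => (f y - f x) * g y
  have hneg : ∑ x, ∑ y ∈ G.neighborFinset x, (f x - f y) * g x = -S := by
    simp only [S, ← sum_neg_distrib, ← neg_mul, neg_sub]
  have hgam : ∑ x, gam G f g x = (1 / 2) * (∑ x, ∑ y ∈ G.neighborFinset x, (f x - f y) * g x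
      + ∑ x, ∑ y ∈ G.neighborFinset x, (f y - f x) * g y) := by
    simp only [gam_eq_sum, ← mul_sum, ← sum_add_distrib]
    congr 1
    exact sum_congr rfl fun x _ => sum_congr rfl fun y _ => by ring
  rw [hS, hgam, hswap, hneg]
  ring

lemma lap_mul_self_sub (w : V → ℝ) (x : V) :
    lap G (fun v => w v * w v) x - 2 * w x * lap G w x = 2 * gam G w w x := by
  rw [lap_eq_sum, lap_eq_sum, gam_eq_sum, mul_sum, ← sum_sub_distrib, ← mul_assoc, mul_sum]
  exact sum_congr rfl fun y _ => by ring

lemma hasDerivAt_gam_self {a : ℝ → V → ℝ} {a' : V → ℝ} {u₀ : ℝ}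
    (ha : ∀ v, HasDerivAt (fun u => a u v) (a' v) u₀) (x : V) :
    HasDerivAt (fun u => gam G (a u) (a u) x) (2 * gam G (a u₀) a' x) u₀ := by
  simp only [gam_eq_sum]
  refine (HasDerivAt.fun_sum fun y _ =>
    ((ha x).sub (ha y)).mul ((ha x).sub (ha y))).const_mul (1 / 2) |>.congr_deriv ?_
  rw [← mul_assoc, mul_sum, mul_sum]
  exact sum_congr rfl fun y _ => by simp only [Pi.sub_apply]; ring

end GraphCalculus

section MatrixExp

open Finset Matrix
attribute [local instance] Matrix.linftyOpNormedRing Matrix.linftyOpNormedAlgebra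

variable {n : Type*} [Fintype n] [DecidableEq n]

lemma exp_apply_nonneg_of_nonneg {X : Matrix n n ℝ} (hX : ∀ i j, 0 ≤ X i j) (i j : n) :
    0 ≤ NormedSpace.exp X i j := by
  have hpow : ∀ k : ℕ, ∀ i j, 0 ≤ (X ^ k) i j := by
    intro k
    induction k with
    | zero => intro i j; rw [pow_zero, one_apply]; split_ifs <;> norm_num
    | succ k ih =>
      intro i j
      rw [pow_succ, mul_apply]
      exact sum_nonneg fun l _ => mul_nonneg (ih i l) (hX l j)
  have hsum := Pi.hasSum.mp (Pi.hasSum.mp (NormedSpace.exp_series_hasSum_exp' (𝕂 := ℝ) X) i) j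
  exact hsum.nonneg fun k => mul_nonneg (by positivity) (hpow k i j)

lemma exp_apply_nonneg_of_offDiag_nonneg {M : Matrix n n ℝ} (hM : ∀ i j, i ≠ j → 0 ≤ M i j)
    (i j : n) : 0 ≤ NormedSpace.exp M i j := by
  -- shifting by the scalar `c`, which commutes with `M`, makes every entry nonnegative
  set c := ∑ k, |M k k|
  have hshift : ∀ i j, 0 ≤ (M + algebraMap ℝ _ c) i j := by
    intro i j
    rw [Matrix.add_apply, algebraMap_eq_diagonal, diagonal_apply]
    split_ifs with h
    · subst h
      have := single_le_sum (f := fun k => |M k k|) (fun k _ => abs_nonneg _) (mem_univ i)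
      simp only [Pi.algebraMap_apply, Algebra.algebraMap_self, RingHom.id_apply]
      linarith [neg_abs_le (M i i)]
    · simpa using hM i j h
  have hsplit : NormedSpace.exp M
      = NormedSpace.exp (M + algebraMap ℝ _ c) * (Real.exp (-c) • 1 : Matrix n n ℝ) := by
    have hexp := NormedSpace.exp_add_of_commute
      (Algebra.commute_algebraMap_right (-c) (M + algebraMap ℝ (Matrix n n ℝ) c))
    rw [map_neg, add_neg_cancel_right] at hexp
    rw [← Algebra.algebraMap_eq_smul_one, Real.exp_eq_exp_ℝ, NormedSpace.algebraMap_exp_comm,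
      map_neg]
    exact hexp
  rw [hsplit, mul_smul_comm, mul_one, Matrix.smul_apply, smul_eq_mul]
  exact mul_nonneg (Real.exp_pos _).le (exp_apply_nonneg_of_nonneg hshift i j)

end MatrixExp

section HeatSemigroup

open Finset Matrix
attribute [local instance] Matrix.linftyOpNormedRing Matrix.linftyOpNormedAlgebra

variable {V : Type*} [Fintype V] [DecidableEq V] (G : SimpleGraph V)

open Classical in
lemma lapMat_eq_neg_lapMatrix : lapMat G = -G.lapMatrix ℝ := by
  ext x y
  simp only [lapMat, SimpleGraph.lapMatrix, SimpleGraph.degMatrix, SimpleGraph.adjMatrix, degC,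
    of_apply, Matrix.neg_apply, Matrix.sub_apply, diagonal_apply, SimpleGraph.degree,
    SimpleGraph.neighborFinset_eq_filter]
  split_ifs <;> simp_all

lemma lapMat_mulVec (f : V → ℝ) : lapMat G *ᵥ f = lap G f := by
  classical
  ext x
  rw [lapMat_eq_neg_lapMatrix, neg_mulVec, Pi.neg_apply, SimpleGraph.lapMatrix_mulVec_apply,
    lap_eq_sum, sum_sub_distrib, sum_const, SimpleGraph.card_neighborFinset_eq_degree, nsmul_eq_mul]
  ring

lemma lapMat_isSymm : (lapMat G).IsSymm := by
  classical
  rw [lapMat_eq_neg_lapMatrix]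
  exact (G.isSymm_lapMatrix ℝ).neg

lemma heat_zero (f : V → ℝ) : heat G 0 f = f := by
  rw [heat, zero_smul, NormedSpace.exp_zero, one_mulVec]

lemma heat_smul (c u : ℝ) (f : V → ℝ) : heat G u (c • f) = c • heat G u f :=
  mulVec_smul _ c f

lemma lap_heat (u : ℝ) (f : V → ℝ) : lap G (heat G u f) = heat G u (lap G f) := by
  rw [heat, heat, ← lapMat_mulVec, ← lapMat_mulVec, mulVec_mulVec, mulVec_mulVec,
    ((Commute.refl (lapMat G)).smul_right u).exp_right.eq]

lemma sum_heat_mul_comm (u : ℝ) (a b : V → ℝ) :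
    ∑ x, heat G u a x * b x = ∑ x, a x * heat G u b x := by
  change heat G u a ⬝ᵥ b = a ⬝ᵥ heat G u b
  have hsymm := ((lapMat_isSymm G).smul u).exp
  rw [heat, heat, dotProduct_comm, dotProduct_mulVec, ← mulVec_transpose, hsymm.eq,
    dotProduct_comm]

lemma hasDerivAt_heat_apply {w : ℝ → V → ℝ} {w' : V → ℝ} {u₀ : ℝ}
    (hw : ∀ y, HasDerivAt (fun u => w u y) (w' y) u₀) (x : V) :
    HasDerivAt (fun u => heat G u (w u) x) (heat G u₀ (lap G (w u₀) + w') x) u₀ := by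
  have hentry : ∀ y, HasDerivAt (fun u => NormedSpace.exp (u • lapMat G) x y)
      ((NormedSpace.exp (u₀ • lapMat G) * lapMat G) x y) u₀ := fun y =>
    (entryLinearMap ℝ ℝ x y).toContinuousLinearMap.hasFDerivAt.comp_hasDerivAt u₀
      (hasDerivAt_exp_smul_const (lapMat G) u₀)
  refine (HasDerivAt.fun_sum fun y _ => (hentry y).mul (hw y)).congr_deriv ?_
  rw [heat, ← lapMat_mulVec, mulVec_add, mulVec_mulVec, Pi.add_apply]
  simp only [mulVec, dotProduct, sum_add_distrib]

lemma hasDerivAt_heat (f : V → ℝ) (x : V) (u₀ : ℝ) :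
    HasDerivAt (fun u => heat G u f x) (heat G u₀ (lap G f) x) u₀ := by
  simpa using hasDerivAt_heat_apply G (w := fun _ => f) (w' := 0)
    (fun y => hasDerivAt_const u₀ (f y)) x

lemma hasDerivAt_sum_sub_heat_mul (f g : V → ℝ) (u₀ : ℝ) :
    HasDerivAt (fun u => ∑ x, (f x - heat G u f x) * g x) (∑ x, gam G f (heat G u₀ g) x) u₀ := by
  refine (HasDerivAt.fun_sum fun x _ =>
    ((hasDerivAt_const u₀ (f x)).sub (hasDerivAt_heat G f x u₀)).mul_const (g x)).congr_deriv ?_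
  rw [← neg_neg (∑ x, gam G f _ x), ← sum_lap_mul, ← sum_heat_mul_comm, ← sum_neg_distrib]
  simp only [zero_sub, neg_mul]

lemma heat_one (u : ℝ) : heat G u (fun _ => 1) = fun _ => 1 := by
  ext x
  have hconst := is_const_of_deriv_eq_zero
    (fun u => (hasDerivAt_heat G (fun _ => 1) x u).differentiableAt)
    (fun u => by rw [(hasDerivAt_heat G _ x u).deriv, lap_const, heat, mulVec_zero, Pi.zero_apply])
  rw [hconst u 0, heat_zero]

lemma heat_mono {u : ℝ} (hu : 0 ≤ u) {f₁ f₂ : V → ℝ} (hf : f₁ ≤ f₂) :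
    heat G u f₁ ≤ heat G u f₂ := by
  intro x
  refine sum_le_sum fun y _ => mul_le_mul_of_nonneg_left (hf y) ?_
  refine exp_apply_nonneg_of_offDiag_nonneg (fun i j hij => ?_) x y
  simp only [Matrix.smul_apply, lapMat, of_apply, if_neg hij, sub_zero, smul_eq_mul]
  split_ifs <;> positivity

end HeatSemigroup

section ReversePoincare

variable {V : Type*} [Fintype V] [DecidableEq V] (G : SimpleGraph V)

def heatGamInterp (g : V → ℝ) (s u : ℝ) : V → ℝ :=
  heat G u (gam G (heat G (s - u) g) (heat G (s - u) g))

def heatSqInterp (g : V → ℝ) (s u : ℝ) : V → ℝ :=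
  heat G u (fun y => heat G (s - u) g y * heat G (s - u) g y)

lemma hasDerivAt_heat_sub (g : V → ℝ) (s : ℝ) (x : V) (u₀ : ℝ) :
    HasDerivAt (fun u => heat G (s - u) g x) (-lap G (heat G (s - u₀) g) x) u₀ := by
  have h := (hasDerivAt_heat G g x (s - u₀)).comp u₀ ((hasDerivAt_id u₀).const_sub s)
  rw [lap_heat]
  simpa [Function.comp_def] using h

lemma hasDerivAt_heatGamInterp (g : V → ℝ) (s : ℝ) (x : V) (u₀ : ℝ) :
    HasDerivAt (fun u => heatGamInterp G g s u x)
      (heat G u₀ ((2 : ℝ) • gam2 G (heat G (s - u₀) g)) x) u₀ := by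
  have hgam := fun y => hasDerivAt_gam_self G (hasDerivAt_heat_sub G g s · u₀) y
  refine (hasDerivAt_heat_apply G hgam x).congr_deriv ?_
  congr 1
  ext y
  simp only [gam2, gam_neg_right, Pi.smul_apply, Pi.add_apply, smul_eq_mul]
  ring

lemma hasDerivAt_heatSqInterp (g : V → ℝ) (s : ℝ) (x : V) (u₀ : ℝ) :
    HasDerivAt (fun u => heatSqInterp G g s u x) (2 * heatGamInterp G g s u₀ x) u₀ := by
  have hsq := fun y => (hasDerivAt_heat_sub G g s y u₀).fun_mul (hasDerivAt_heat_sub G g s y u₀)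
  refine (hasDerivAt_heat_apply G hsq x).congr_deriv ?_
  rw [heatGamInterp, ← smul_eq_mul, ← Pi.smul_apply, ← heat_smul]
  congr 1
  ext y
  have := lap_mul_self_sub G (heat G (s - u₀) g) y
  simp only [Pi.smul_apply, Pi.add_apply, smul_eq_mul]
  linarith

lemma exp_mul_heatGamInterp_zero_le {K : ℝ} (hric : RicGE G K) (g : V → ℝ) (s : ℝ) (x : V)
    {u : ℝ} (hu : 0 ≤ u) :
    Real.exp (2 * K * u) * heatGamInterp G g s 0 x ≤ heatGamInterp G g s u x := by
  have hF := hasDerivAt_heatGamInterp G g s x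
  have hbochner : ∀ v, 0 ≤ v →
      2 * K * heatGamInterp G g s v x ≤ heat G v ((2 : ℝ) • gam2 G (heat G (s - v) g)) x := by
    intro v hv
    rw [heatGamInterp, ← smul_eq_mul, ← Pi.smul_apply, ← heat_smul]
    exact heat_mono G hv (fun y => by
      simp only [Pi.smul_apply, smul_eq_mul]; linarith [hric (heat G (s - v) g) y]) x
  have hΦ : ∀ v, HasDerivAt (fun v => Real.exp (-(2 * K) * v) * heatGamInterp G g s v x)
      (Real.exp (-(2 * K) * v) * (-(2 * K) * 1) * heatGamInterp G g s v x
        + Real.exp (-(2 * K) * v) * heat G v ((2 : ℝ) • gam2 G (heat G (s - v) g)) x) v :=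
    fun v => ((hasDerivAt_id' v).const_mul _).exp.mul (hF v)
  have hmono := le_of_hasDerivAt_nonneg hu (fun v _ => (hΦ v).continuousAt.continuousWithinAt)
    (fun v _ => hΦ v) (fun v hv => by nlinarith [hbochner v hv.1.le, Real.exp_pos (-(2 * K) * v)])
  rwa [mul_zero, Real.exp_zero, one_mul, neg_mul, Real.exp_neg,
    le_inv_mul_iff₀ (Real.exp_pos _)] at hmono

theorem gam_heat_le_inv {K : ℝ} (hric : RicGE G K) {g : V → ℝ} (hg : ∀ y, |g y| ≤ 1) {s : ℝ}
    (hs : 0 < s) (hKs : -(1 / 2) ≤ K * s) (x : V) :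
    gam G (heat G s g) (heat G s g) x ≤ 1 / s := by
  set F₀ := heatGamInterp G g s 0 x
  have hF₀ : F₀ = gam G (heat G s g) (heat G s g) x := by
    simp only [F₀, heatGamInterp, heat_zero, sub_zero]
  have hF₀_nonneg : 0 ≤ F₀ := hF₀ ▸ gam_self_nonneg G _ x
  have hderiv : ∀ u, HasDerivAt (fun u => heatSqInterp G g s u x - (2 * u + 2 * K * u ^ 2) * F₀)
      (2 * heatGamInterp G g s u x - (2 + 4 * K * u) * F₀) u := fun u =>
    (hasDerivAt_heatSqInterp G g s x u).sub <| HasDerivAt.mul_const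
      ((((hasDerivAt_id' u).const_mul 2).add ((hasDerivAt_pow 2 u).const_mul (2 * K))).congr_deriv
        (by norm_num; ring)) F₀
  have hmono := le_of_hasDerivAt_nonneg hs.le (fun u _ => (hderiv u).continuousAt.continuousWithinAt)
    (fun u _ => hderiv u) (fun u hu => by
      have hlow : Real.exp (2 * K * u) * F₀ ≤ heatGamInterp G g s u x :=
        exp_mul_heatGamInterp_zero_le G hric g s x hu.1.le
      nlinarith [mul_le_mul_of_nonneg_right (Real.add_one_le_exp (2 * K * u)) hF₀_nonneg])
  have hsq_s : heatSqInterp G g s s x ≤ 1 := by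
    rw [heatSqInterp, sub_self, heat_zero, ← congrFun (heat_one G s) x]
    exact heat_mono G hs.le (fun y => by nlinarith [abs_le.mp (hg y)]) x
  have hsq_zero : 0 ≤ heatSqInterp G g s 0 x := by
    rw [heatSqInterp, heat_zero]
    exact mul_self_nonneg _
  have hcoef : 0 ≤ s * (1 + 2 * K * s) * F₀ :=
    mul_nonneg (mul_nonneg hs.le (by linarith)) hF₀_nonneg
  rw [← hF₀, le_div_iff₀ hs]
  nlinarith

end ReversePoincare

lemma sum_gam_heat_le {V : Type*} [Fintype V] [DecidableEq V] {G : SimpleGraph V} {K : ℝ}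
    (hric : RicGE G K) (f : V → ℝ) {g : V → ℝ} (hg : ∀ y, |g y| ≤ 1) {s : ℝ} (hs : 0 < s)
    (hKs : -(1 / 2) ≤ K * s) :
    ∑ x, gam G f (heat G s g) x ≤ (∑ x, √(gam G f f x)) / √s := by
  rw [Finset.sum_div]
  refine Finset.sum_le_sum fun x _ => (gam_le_sqrt_mul_sqrt G f _ x).trans ?_
  rw [div_eq_mul_one_div, ← Real.sqrt_one, ← Real.sqrt_div' _ hs.le]
  gcongr
  exact gam_heat_le_inv G hric hg hs hKs x

/-- gradient estimate: if `Ric(G) ≥ K` then for `0 ≤ t` (with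
`t ≤ 1/(2|K|)` when `K < 0`), `‖f - P_t f‖₁ ≤ 2 √t ‖√(Γ(f))‖₁`. -/
theorem gradient_estimate {V : Type*} [Fintype V] [DecidableEq V] (G : SimpleGraph V)
    (K : ℝ) (hric : RicGE G K) (f : V → ℝ) (t : ℝ) (ht0 : 0 ≤ t)
    (ht1 : K < 0 → t ≤ 1 / (2 * |K|)) :
    ∑ v, |f v - heat G t f v| ≤ 2 * Real.sqrt t * ∑ v, Real.sqrt (gam G f f v) := by
  set g : V → ℝ := fun v => SignType.sign (f v - heat G t f v)
  set C := ∑ v, √(gam G f f v)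
  have hg : ∀ v, |g v| ≤ 1 := fun v => by
    cases h : SignType.sign (f v - heat G t f v) <;> simp [g, h]
  have hKs : ∀ s ∈ Set.Ioo 0 t, -(1 / 2) ≤ K * s := by
    intro s hs
    rcases le_or_gt 0 K with hK | hK
    · nlinarith [hs.1]
    · have := ht1 hK
      rw [abs_of_neg hK, le_div_iff₀ (by linarith)] at this
      nlinarith [hs.2]
  have hmono := le_of_hasDerivAt_nonneg ht0
    (φ := fun s => 2 * C * √s - ∑ v, (f v - heat G s f v) * g v)
    ((continuous_const.mul Real.continuous_sqrt).sub (continuous_iff_continuousAt.2 fun s =>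
      (hasDerivAt_sum_sub_heat_mul G f g s).continuousAt)).continuousOn
    (fun s hs => ((Real.hasDerivAt_sqrt hs.1.ne').const_mul _).sub
      (hasDerivAt_sum_sub_heat_mul G f g s))
    (fun s hs => by
      rw [mul_one_div, mul_div_mul_left _ _ two_ne_zero]
      linarith [sum_gam_heat_le hric f hg hs.1 (hKs s hs)])
  simp only [heat_zero, sub_self, zero_mul, Finset.sum_const_zero, Real.sqrt_zero, mul_zero,
    g, self_mul_sign] at hmono
  linarith
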